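/- If B ⊆ V(T_n) is i-left-compressed for i = 1,2 and contains k vertices on the diagonal {v : v1+v2 = n} with k ≥ 1, then |B| ≥ (n+1) + n + (n−1) + ... + (n−k+2), i.e. |B| ≥ k(2n+3−k)/2. -/

import Mathlib

/-- Vertex set of the triangular grid graph `T_n`. -/
def TnV (n : ℕ) : Finset (ℕ × ℕ) :=
  (Finset.range (n+1) ×ˢ Finset.range (n+1)).filter (fun v => v.1 + v.2 ≤ n)

/-- Adjacency in the triangular grid graph. -/
def adj (u v : ℕ × ℕ) : Prop :=
  (v.1 = u.1 + 1 ∧ v.2 = u.2) ∨ (u.1 = v.1 + 1 ∧ u.2 = v.2) ∨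
  (v.2 = u.2 + 1 ∧ v.1 = u.1) ∨ (u.2 = v.2 + 1 ∧ u.1 = v.1) ∨
  (v.1 = u.1 + 1 ∧ u.2 = v.2 + 1) ∨ (u.1 = v.1 + 1 ∧ v.2 = u.2 + 1)

instance : ∀ u v : ℕ × ℕ, Decidable (adj u v) := fun u v => by
  unfold adj; infer_instance

/-- The (exterior) vertex boundary of `A` in `T_n`. -/
def boundary (n : ℕ) (A : Finset (ℕ × ℕ)) : Finset (ℕ × ℕ) :=
  (TnV n).filter (fun v => v ∉ A ∧ ∃ u ∈ A, adj u v)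

/-- The neighborhood `N(A)` of `A` in `T_n`. -/
def nbhd (n : ℕ) (A : Finset (ℕ × ℕ)) : Finset (ℕ × ℕ) :=
  (TnV n).filter (fun v => v ∈ A ∨ ∃ u ∈ A, adj u v)

/-- `sle u v` : `u` comes before (or equals) `v` in the simplicial ordering. -/
def sle (u v : ℕ × ℕ) : Prop :=
  u.1 + u.2 < v.1 + v.2 ∨ (u.1 + u.2 = v.1 + v.2 ∧ v.1 ≤ u.1)

/-- `C` is an initial segment of the simplicial ordering on `V(T_n)`. -/
def IsInitSeg (n : ℕ) (C : Finset (ℕ × ℕ)) : Prop :=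
  C ⊆ TnV n ∧ ∀ v ∈ C, ∀ u ∈ TnV n, sle u v → u ∈ C

/-- `D` is a final segment of the simplicial ordering on `V(T_n)`. -/
def IsFinalSeg (n : ℕ) (D : Finset (ℕ × ℕ)) : Prop :=
  D ⊆ TnV n ∧ ∀ v ∈ D, ∀ u ∈ TnV n, sle v u → u ∈ D

/-- `B` is 1-left-compressed. -/
def LeftComp1 (B : Finset (ℕ × ℕ)) : Prop :=
  ∀ v ∈ B, ∀ w2 < v.2, (v.1, w2) ∈ B

/-- `B` is 2-left-compressed. -/
def LeftComp2 (B : Finset (ℕ × ℕ)) : Prop :=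
  ∀ v ∈ B, ∀ w1 < v.1, (w1, v.2) ∈ B

open Finset in

lemma mono_of_step {m : ℕ → ℕ} (h : ∀ y, m (y+1) ≤ m y) : ∀ a b : ℕ, a ≤ b → m b ≤ m a := by
  intro a b hab
  induction b with
  | zero => interval_cases a; exact le_rfl
  | succ b ih =>
    rcases Nat.eq_or_lt_of_le hab with h' | h'
    · subst h'; exact le_rfl
    · exact le_trans (h b) (ih (Nat.lt_succ_iff.mp h'))

lemma key : ∀ (n : ℕ) (m : ℕ → ℕ), (∀ y, m (y+1) ≤ m y) →
    (∀ y, y ≤ n → m y + y ≤ n+1) →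
    (1 ≤ ((Finset.range (n+1)).filter (fun y => n+1 ≤ m y + y)).card) →
    ((Finset.range (n+1)).filter (fun y => n+1 ≤ m y + y)).card *
      (2*n+3 - ((Finset.range (n+1)).filter (fun y => n+1 ≤ m y + y)).card)
      ≤ 2 * ∑ y ∈ Finset.range (n+1), m y := by
  intro n
  induction n with
  | zero =>
    intro m hmono hht hk
    set T := (Finset.range (0+1)).filter (fun y => 0+1 ≤ m y + y) with hT
    obtain ⟨y, hy⟩ := Finset.card_pos.mp hk
    have hy' := Finset.mem_filter.mp hy
    have hy0 : y = 0 := by have := Finset.mem_range.mp hy'.1; omega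
    have hm : 1 ≤ m 0 := by subst hy0; omega
    have hcle : T.card ≤ 1 := le_trans (Finset.card_filter_le _ _) (by simp)
    have hc1 : T.card = 1 := le_antisymm hcle hk
    rw [hc1, Finset.sum_range_one]
    omega
  | succ n ih =>
    intro m hmono hht hk
    set S := (Finset.range (n+1+1)).filter (fun y => n+1+1 ≤ m y + y) with hSdef
    set S' := (Finset.range (n+1)).filter (fun y => n+1 ≤ (fun y => m (y+1)) y + y) with hS'def
    have hmap : S.erase 0 = S'.image (· + 1) := by
      ext a
      simp only [hSdef, hS'def, Finset.mem_erase, Finset.mem_filter, Finset.mem_range,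
        Finset.mem_image]
      constructor
      · rintro ⟨ha0, ha, hma⟩
        refine ⟨a - 1, ⟨by omega, ?_⟩, by omega⟩
        have h : a - 1 + 1 = a := by omega
        rw [h]; omega
      · rintro ⟨b, ⟨hb, hmb⟩, rfl⟩
        exact ⟨by omega, by omega, by omega⟩
    have hcard' : (S.erase 0).card = S'.card := by
      rw [hmap]; exact Finset.card_image_of_injective _ (fun a b h => by omega)
    have hmono' : ∀ y, m (y+1+1) ≤ m (y+1) := fun y => hmono (y+1)
    have hht' : ∀ y, y ≤ n → m (y+1) + y ≤ n+1 := by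
      intro y hy; have := hht (y+1) (by omega); omega
    have hsum : ∑ y ∈ Finset.range (n+1+1), m y
        = (∑ y ∈ Finset.range (n+1), m (y+1)) + m 0 := Finset.sum_range_succ' m (n+1)
    have hk'le : S'.card ≤ n + 1 := le_trans (Finset.card_filter_le _ _) (by simp)
    by_cases h0 : n+1+1 ≤ m 0 + 0
    · -- 0 ∈ S
      have h0S : 0 ∈ S := by
        simp only [hSdef, Finset.mem_filter, Finset.mem_range]; exact ⟨by omega, h0⟩
      have hm0 : m 0 = n + 2 := by have := hht 0 (by omega); omega
      have hScard : S.card = S'.card + 1 := by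
        have ha := Finset.card_erase_of_mem h0S
        have hb : 1 ≤ S.card := Finset.card_pos.mpr ⟨0, h0S⟩
        omega
      by_cases hk' : 1 ≤ S'.card
      · have hIH : S'.card * (2*n+3 - S'.card) ≤ 2 * ∑ y ∈ Finset.range (n+1), m (y+1) := by
          have h := ih (fun y => m (y+1)) hmono' hht' hk'
          rw [← hS'def] at h
          exact h
        obtain ⟨a, ha⟩ : ∃ a, 2*n+3 - S'.card = a := ⟨_, rfl⟩
        have hgoal : S.card * (2*(n+1)+3 - S.card) = S'.card * a + (S'.card + a) + 1 := by
          rw [hScard]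
          have h : 2*(n+1)+3 - (S'.card+1) = a + 1 := by omega
          rw [h]; ring
        rw [hgoal, hsum]
        rw [ha] at hIH
        obtain ⟨P, hP⟩ : ∃ P, S'.card * a = P := ⟨_, rfl⟩
        rw [hP] at hIH ⊢
        omega
      · -- k = 1
        have hk1 : S.card = 1 := by omega
        rw [hk1, hsum]
        have hle : m 0 ≤ (∑ y ∈ Finset.range (n+1), m (y+1)) + m 0 := Nat.le_add_left _ _
        omega
    · -- 0 ∉ S
      have h0S : 0 ∉ S := by
        simp only [hSdef, Finset.mem_filter, Finset.mem_range]; tauto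
      have hScard : S.card = S'.card := by
        rw [← hcard', Finset.erase_eq_of_notMem h0S]
      have hk' : 1 ≤ S'.card := by omega
      have hsmall : ∃ y ∈ S, y ≤ n + 2 - S.card := by
        by_contra hc
        push_neg at hc
        have hsub : S ⊆ Finset.Icc (n+3-S.card) (n+1) := by
          intro y hy
          have ha := hc y hy
          have hb : y < n + 2 := by
            have := (Finset.mem_filter.mp hy).1
            simp [Finset.mem_range] at this; omega
          simp only [Finset.mem_Icc]; omega
        have h3 := Finset.card_le_card hsub
        rw [Nat.card_Icc] at h3
        have h4 : S.card ≤ n + 2 := le_trans (Finset.card_filter_le _ _) (by simp)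
        omega
      obtain ⟨y₁, hy₁S, hy₁⟩ := hsmall
      have hy₁m : n + 2 ≤ m y₁ + y₁ := by
        have := (Finset.mem_filter.mp hy₁S).2
        omega
      have hm0k : S.card ≤ m 0 := by
        have := mono_of_step hmono 0 y₁ (Nat.zero_le _)
        omega
      have hIH : S'.card * (2*n+3 - S'.card) ≤ 2 * ∑ y ∈ Finset.range (n+1), m (y+1) := by
        have h := ih (fun y => m (y+1)) hmono' hht' hk'
        rw [← hS'def] at h
        exact h
      obtain ⟨a, ha⟩ : ∃ a, 2*n+3 - S'.card = a := ⟨_, rfl⟩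
      have hgoal : S.card * (2*(n+1)+3 - S.card) = S'.card * a + 2 * S'.card := by
        rw [hScard]
        have h : 2*(n+1)+3 - S'.card = a + 2 := by omega
        rw [h]; ring
      rw [hgoal, hsum]
      rw [ha] at hIH
      obtain ⟨P, hP⟩ : ∃ P, S'.card * a = P := ⟨_, rfl⟩
      rw [hP] at hIH ⊢
      omega

lemma mem_TnV {n : ℕ} {v : ℕ × ℕ} : v ∈ TnV n ↔ v.1 + v.2 ≤ n := by
  simp only [TnV, Finset.mem_filter, Finset.mem_product, Finset.mem_range]
  omega

theorem compressed_diag_card_lower (n k : ℕ) (B : Finset (ℕ × ℕ))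
    (hB : B ⊆ TnV n) (h1 : LeftComp1 B) (h2 : LeftComp2 B)
    (hk : (B.filter (fun v => v.1 + v.2 = n)).card = k) (hk1 : 1 ≤ k) :
    k * (2 * n + 3 - k) ≤ 2 * B.card := by
  set m : ℕ → ℕ := fun y => (B.filter (fun v => v.2 = y)).card with hm
  have hmono : ∀ y, m (y+1) ≤ m y := by
    intro y
    apply Finset.card_le_card_of_injOn (fun v => (v.1, y))
    · intro v hv
      have hv' := Finset.mem_filter.mp hv
      exact Finset.mem_filter.mpr ⟨h1 v hv'.1 y (by omega), rfl⟩
    · intro v hv w hw heq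
      have hv' := Finset.mem_filter.mp (Finset.mem_coe.mp hv)
      have hw' := Finset.mem_filter.mp (Finset.mem_coe.mp hw)
      have heq' : (v.1, y) = (w.1, y) := heq
      have h1 : v.1 = w.1 := by injection heq'
      exact Prod.ext h1 (hv'.2.trans hw'.2.symm)
  have hht : ∀ y, y ≤ n → m y + y ≤ n + 1 := by
    intro y hy
    have hc : (B.filter (fun v => v.2 = y)).card ≤ (Finset.range (n+1-y)).card := by
      apply Finset.card_le_card_of_injOn (fun v => v.1)
      · intro v hv
        have hv' := Finset.mem_filter.mp hv
        have := mem_TnV.mp (hB hv'.1)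
        simp only [Finset.mem_coe, Finset.mem_range]
        omega
      · intro v hv w hw heq
        have hv' := Finset.mem_filter.mp (Finset.mem_coe.mp hv)
        have hw' := Finset.mem_filter.mp (Finset.mem_coe.mp hw)
        exact Prod.ext heq (hv'.2.trans hw'.2.symm)
    rw [Finset.card_range] at hc
    simp only [hm]
    omega
  have himg : (B.filter (fun v => v.1 + v.2 = n)).image (fun v => v.2)
      = (Finset.range (n+1)).filter (fun y => n+1 ≤ m y + y) := by
    ext y
    simp only [Finset.mem_image, Finset.mem_filter, Finset.mem_range]
    constructor
    · rintro ⟨v, ⟨hvB, hvd⟩, rfl⟩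
      refine ⟨by omega, ?_⟩
      have hcount : (Finset.range (n+1-v.2)).card ≤ m v.2 := by
        apply Finset.card_le_card_of_injOn (fun x => (x, v.2))
        · intro x hx
          have hx' := Finset.mem_range.mp hx
          rcases Nat.lt_or_ge x v.1 with h | h
          · exact Finset.mem_filter.mpr ⟨h2 v hvB x h, rfl⟩
          · have hxv : x = v.1 := by omega
            have hxy : (x, v.2) = v := Prod.ext hxv rfl
            simp only [hxy]
            exact Finset.mem_filter.mpr ⟨hvB, rfl⟩
        · intro a _ b _ h
          exact congrArg Prod.fst h
      rw [Finset.card_range] at hcount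
      omega
    · rintro ⟨hy, hmy⟩
      have himgsub : (B.filter (fun v => v.2 = y)).image (fun v => v.1)
          ⊆ Finset.range (n+1-y) := by
        intro x hx
        obtain ⟨w, hw, rfl⟩ := Finset.mem_image.mp hx
        have hw' := Finset.mem_filter.mp hw
        have := mem_TnV.mp (hB hw'.1)
        simp only [Finset.mem_range]
        omega
      have hcardim : ((B.filter (fun v => v.2 = y)).image (fun v => v.1)).card
          = (B.filter (fun v => v.2 = y)).card := by
        apply Finset.card_image_of_injOn
        intro v hv w hw heq
        have hv' := Finset.mem_filter.mp (Finset.mem_coe.mp hv)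
        have hw' := Finset.mem_filter.mp (Finset.mem_coe.mp hw)
        exact Prod.ext heq (hv'.2.trans hw'.2.symm)
      have heq : (B.filter (fun v => v.2 = y)).image (fun v => v.1) = Finset.range (n+1-y) := by
        apply Finset.eq_of_subset_of_card_le himgsub
        rw [Finset.card_range, hcardim]
        simp only [hm] at hmy
        omega
      have : n - y ∈ (B.filter (fun v => v.2 = y)).image (fun v => v.1) := by
        rw [heq]
        simp only [Finset.mem_range]
        omega
      obtain ⟨w, hw, hw1⟩ := Finset.mem_image.mp this
      have hw' := Finset.mem_filter.mp hw
      have hw1' : w.1 = n - y := hw1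
      exact ⟨w, ⟨hw'.1, by omega⟩, hw'.2⟩
  have hinj : Set.InjOn (fun v : ℕ × ℕ => v.2) (B.filter (fun v => v.1 + v.2 = n)) := by
    intro v hv w hw heq
    have hv' := Finset.mem_filter.mp (Finset.mem_coe.mp hv)
    have hw' := Finset.mem_filter.mp (Finset.mem_coe.mp hw)
    have heq' : v.2 = w.2 := heq
    have h1 : v.1 = w.1 := by omega
    exact Prod.ext h1 heq'
  have hkf : ((Finset.range (n+1)).filter (fun y => n+1 ≤ m y + y)).card = k := by
    rw [← himg, Finset.card_image_of_injOn hinj, hk]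
  have hBcard : B.card = ∑ y ∈ Finset.range (n+1), m y := by
    apply Finset.card_eq_sum_card_fiberwise
    intro v hv
    have := mem_TnV.mp (hB hv)
    simp only [Finset.mem_coe, Finset.mem_range]
    omega
  have := key n m hmono hht (by rw [hkf]; exact hk1)
  rw [hkf] at this
  rw [hBcard]
  exact this
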